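/- arXiv:2502.19855 — 2 statements merged into one kernel-verified Lean document; each statement's English description precedes it below -/
import Mathlib

section
/- Let T be an A-bounded operator and q ∈ D, and suppose the range of A has dimension at least 2. Then |q|·w_A(T) ≤ w_{q,A}(T), where w_A(T) = sup{|⟨Tx,x⟩_A| : x ∈ H, ‖x‖_A = 1}. -/
noncomputable section

open Filter

variable {H : Type*} [NormedAddCommGroup H] [InnerProductSpace ℂ H] [CompleteSpace H]

/-- The paper's semi-inner product `⟨x, y⟩_A = ⟨A x, y⟩`, where the inner product of the
paper is linear in the *first* argument; in Mathlib's convention this is `⟪y, A x⟫_ℂ`. -/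
def sipA (A : H →L[ℂ] H) (x y : H) : ℂ := inner ℂ y (A x)

/-- The `A`-seminorm `‖x‖_A = ⟨A x, x⟩ ^ (1/2)`. -/
def semiNormA (A : H →L[ℂ] H) (x : H) : ℝ := Real.sqrt (sipA A x x).re

/-- The `A`-`q`-numerical range `W_{q,A}(T)`. -/
def WqA (A : H →L[ℂ] H) (q : ℂ) (T : H →L[ℂ] H) : Set ℂ :=
  {z | ∃ x y : H, semiNormA A x = 1 ∧ semiNormA A y = 1 ∧ sipA A x y = q ∧ z = sipA A (T x) y}

/-- The `A`-`q`-numerical radius `w_{q,A}(T)`. -/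
def wqA (A : H →L[ℂ] H) (q : ℂ) (T : H →L[ℂ] H) : ℝ := sSup ((fun z : ℂ => ‖z‖) '' WqA A q T)

/-- The `A`-operator seminorm `‖T‖_A = sup {‖T x‖_A : ‖x‖_A ≤ 1}`. -/
def opNormA (A T : H →L[ℂ] H) : ℝ :=
  sSup ((fun x => semiNormA A (T x)) '' {x : H | semiNormA A x ≤ 1})

/-- `T` is `A`-bounded: `‖T x‖_A ≤ c ‖x‖_A` for some `c > 0`. -/
def ABounded (A T : H →L[ℂ] H) : Prop := ∃ c > 0, ∀ x : H, semiNormA A (T x) ≤ c * semiNormA A x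

open scoped InnerProductSpace

/-! Factor `A = B⋆B` (e.g. `B = √A`), so that `⟨x, y⟩_A = ⟪B y, B x⟫` and `‖x‖_A = ‖B x‖`.
As the range of `A`, hence of `B`, has dimension at least two, every `A`-unit vector `x` has an
`A`-unit vector `z` that is `A`-orthogonal to it. With `t = √(1 - |q|²)` the vectors
`y± = q̄ x ± t z` are `A`-unit with `⟨x, y±⟩_A = q`, so `⟨T x, y±⟩_A ∈ W_{q,A}(T)`; their average
is `q ⟨T x, x⟩_A`, whence `|q| |⟨T x, x⟩_A| ≤ w_{q,A}(T)`. -/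

theorem LinearMap.exists_norm_apply_eq_one_inner_eq_zero {𝕜 E F : Type*} [RCLike 𝕜]
    [AddCommGroup E] [Module 𝕜 E] [NormedAddCommGroup F] [InnerProductSpace 𝕜 F]
    (B : E →ₗ[𝕜] F) (hB : 2 ≤ Module.rank 𝕜 (LinearMap.range B)) (x : E) :
    ∃ z, ‖B z‖ = 1 ∧ ⟪B x, B z⟫_𝕜 = 0 := by
  obtain ⟨_, ⟨w, rfl⟩, hw⟩ : ∃ v ∈ LinearMap.range B, v ∉ 𝕜 ∙ B x := by
    by_contra! h
    have := hB.trans ((Submodule.rank_mono h).trans (rank_span_le _))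
    norm_num at this
  set P := (𝕜 ∙ B x).starProjection
  have hP : P (B w) ∈ 𝕜 ∙ B x := Submodule.starProjection_apply_mem _ _
  obtain ⟨c, hc⟩ := Submodule.mem_span_singleton.mp hP
  set u := w - c • x
  have hBu : B u = B w - P (B w) := by simp [u, hc]
  have hBu_ne : B u ≠ 0 := by
    rw [hBu, sub_ne_zero]
    exact fun h => hw (h ▸ hP)
  have hBu_orth : ⟪B x, B u⟫_𝕜 = 0 := by
    rw [hBu]
    exact Submodule.inner_right_of_mem_orthogonal (Submodule.mem_span_singleton_self _)
      (Submodule.sub_starProjection_mem_orthogonal _)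
  refine ⟨(‖B u‖⁻¹ : 𝕜) • u, ?_, ?_⟩
  · rw [map_smul]
    exact norm_smul_inv_norm hBu_ne
  · rw [map_smul, inner_smul_right, hBu_orth, mul_zero]

theorem sipA_add_smul_right {E : Type*} [NormedAddCommGroup E] [InnerProductSpace ℂ E]
    (A : E →L[ℂ] E) (v x z : E) (a b : ℂ) :
    sipA A v (a • x + b • z) = starRingEnd ℂ a * sipA A v x + starRingEnd ℂ b * sipA A v z := by
  simp only [sipA, inner_add_left, inner_smul_left]

section Factorization

variable {A B : H →L[ℂ] H} (hAB : A = star B * B)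
include hAB

theorem sipA_eq_inner (x y : H) : sipA A x y = ⟪B y, B x⟫_ℂ := by
  rw [sipA, hAB, ContinuousLinearMap.star_eq_adjoint, mul_apply_eq_comp,
    ContinuousLinearMap.adjoint_inner_right]

theorem semiNormA_eq_norm (x : H) : semiNormA A x = ‖B x‖ := by
  rw [semiNormA, sipA_eq_inner hAB, inner_self_eq_norm_sq_to_K]
  norm_cast
  exact Real.sqrt_sq (norm_nonneg _)

theorem norm_sipA_le (x y : H) : ‖sipA A x y‖ ≤ semiNormA A x * semiNormA A y := by
  rw [sipA_eq_inner hAB, semiNormA_eq_norm hAB, semiNormA_eq_norm hAB, mul_comm]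
  exact norm_inner_le_norm _ _

theorem rank_range_le_of_eq_star_mul :
    Module.rank ℂ (LinearMap.range A.toLinearMap) ≤
      Module.rank ℂ (LinearMap.range B.toLinearMap) := by
  rw [hAB]
  show Module.rank ℂ (LinearMap.range ((star B).toLinearMap ∘ₗ B.toLinearMap)) ≤ _
  rw [LinearMap.range_comp]
  exact rank_map_le _ _

theorem exists_semiNormA_eq_one_sipA_eq_zero
    (hrank : 2 ≤ Module.rank ℂ (LinearMap.range A.toLinearMap)) (x : H) :
    ∃ z, semiNormA A z = 1 ∧ sipA A x z = 0 := by
  obtain ⟨z, hz, hxz⟩ := B.toLinearMap.exists_norm_apply_eq_one_inner_eq_zero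
    (hrank.trans (rank_range_le_of_eq_star_mul hAB)) x
  refine ⟨z, by rwa [semiNormA_eq_norm hAB], ?_⟩
  rwa [sipA_eq_inner hAB, inner_eq_zero_symm]

theorem bddAbove_norm_WqA {T : H →L[ℂ] H} (hT : ABounded A T) (q : ℂ) :
    BddAbove (norm '' WqA A q T) := by
  obtain ⟨c, -, hc⟩ := hT
  refine ⟨c, ?_⟩
  rintro _ ⟨_, ⟨x, y, hx, hy, -, rfl⟩, rfl⟩
  calc ‖sipA A (T x) y‖ ≤ semiNormA A (T x) * semiNormA A y := norm_sipA_le hAB _ _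
    _ ≤ c * semiNormA A x := by rw [hy, mul_one]; exact hc x
    _ = c := by rw [hx, mul_one]

theorem mem_WqA_of_sipA_eq_zero {x z : H} (hx : semiNormA A x = 1) (hz : semiNormA A z = 1)
    (hxz : sipA A x z = 0) {q : ℂ} {t : ℝ} (ht : ‖q‖ ^ 2 + t ^ 2 = 1) (T : H →L[ℂ] H) :
    q * sipA A (T x) x + t * sipA A (T x) z ∈ WqA A q T := by
  rw [semiNormA_eq_norm hAB] at hx hz
  have hBzx : ⟪B z, B x⟫_ℂ = 0 := by rwa [← sipA_eq_inner hAB]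
  set y := starRingEnd ℂ q • x + (t : ℂ) • z
  have hy : semiNormA A y = 1 := by
    have horth : ⟪starRingEnd ℂ q • B x, (t : ℂ) • B z⟫_ℂ = 0 := by
      rw [inner_smul_left, inner_smul_right, inner_eq_zero_symm.mp hBzx, mul_zero, mul_zero]
    rw [semiNormA_eq_norm hAB, ← pow_eq_one_iff_of_nonneg (norm_nonneg _) two_ne_zero, sq,
      map_add, map_smul, map_smul, norm_add_sq_eq_norm_sq_add_norm_sq_of_inner_eq_zero _ _ horth,
      norm_smul, norm_smul, hx, hz]
    simpa [sq] using ht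
  refine ⟨x, y, ?_, hy, ?_, ?_⟩
  · rw [semiNormA_eq_norm hAB, hx]
  · rw [sipA_add_smul_right, sipA_eq_inner hAB x x, hxz, inner_self_eq_norm_sq_to_K, hx]
    simp
  · rw [sipA_add_smul_right, Complex.conj_conj, Complex.conj_ofReal]

theorem norm_mul_norm_sipA_le_wqA (hrank : 2 ≤ Module.rank ℂ (LinearMap.range A.toLinearMap))
    {T : H →L[ℂ] H} (hT : ABounded A T) {q : ℂ} (hq : ‖q‖ ≤ 1) {x : H} (hx : semiNormA A x = 1) :
    ‖q‖ * ‖sipA A (T x) x‖ ≤ wqA A q T := by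
  obtain ⟨z, hz, hxz⟩ := exists_semiNormA_eq_one_sipA_eq_zero hAB hrank x
  set t := Real.sqrt (1 - ‖q‖ ^ 2)
  have ht : ‖q‖ ^ 2 + t ^ 2 = 1 := by
    rw [Real.sq_sqrt (by nlinarith [norm_nonneg q])]
    ring
  have hle (s : ℝ) (hs : ‖q‖ ^ 2 + s ^ 2 = 1) :
      ‖q * sipA A (T x) x + s * sipA A (T x) z‖ ≤ wqA A q T :=
    le_csSup (bddAbove_norm_WqA hAB hT q) ⟨_, mem_WqA_of_sipA_eq_zero hAB hx hz hxz hs T, rfl⟩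
  calc ‖q‖ * ‖sipA A (T x) x‖
      = ‖(q * sipA A (T x) x + t * sipA A (T x) z) +
          (q * sipA A (T x) x + (-t : ℝ) * sipA A (T x) z)‖ / 2 := by
        push_cast
        ring_nf
        simp
    _ ≤ (wqA A q T + wqA A q T) / 2 := by
        gcongr
        exact (norm_add_le _ _).trans (add_le_add (hle t ht) (hle (-t) (by rwa [neg_sq])))
    _ = wqA A q T := by ring

end Factorization

theorem stmt_9 (A : H →L[ℂ] H) (hA : A.IsPositive)
    (hrank : 2 ≤ Module.rank ℂ (LinearMap.range A.toLinearMap))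
    (T : H →L[ℂ] H) (hT : ABounded A T)
    (q : ℂ) (hq : ‖q‖ ≤ 1) :
    ‖q‖ *
        sSup {r : ℝ | ∃ x : H, semiNormA A x = 1 ∧ r = ‖sipA A (T x) x‖}
      ≤ wqA A q T := by
  have hAB : A = star (CFC.sqrt A) * CFC.sqrt A := by
    rw [(CFC.sqrt_nonneg A).isSelfAdjoint.star_eq,
      CFC.sqrt_mul_sqrt_self A ((ContinuousLinearMap.nonneg_iff_isPositive A).mpr hA)]
  rw [← smul_eq_mul, ← Real.sSup_smul_of_nonneg (norm_nonneg q)]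
  refine Real.sSup_le ?_ (Real.sSup_nonneg ?_)
  · rintro _ ⟨_, ⟨x, hx, rfl⟩, rfl⟩
    exact norm_mul_norm_sipA_le_wqA hAB hrank hT hq hx
  · rintro _ ⟨z, -, rfl⟩
    exact norm_nonneg z
end
end

section
/- Let T be an A-bounded operator with AT² = 0 and AT ≠ 0 (T is A-nilpotent of index 2), suppose the range of A is closed, and let q ∈ D. Then w_{q,A}(T) ≤ ((1 + √(1−|q|²))/2)·‖T‖_A, where ‖T‖_A = sup{‖Tx‖_A : x ∈ H, ‖x‖_A ≤ 1}; moreover W_{q,A}(T) is circular about the origin: for every λ ∈ W_{q,A}(T) and every θ ∈ ℝ, e^{iθ}λ ∈ W_{q,A}(T). -/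
/-!
Put `S = √A`, so that `⟨x, y⟩_A = ⟪S y, S x⟫` and `‖x‖_A = ‖S x‖`. For `ξ = S x`, `η = S y`,
`ζ = S T x` the number `⟨T x, y⟩_A` is `⟪η, ζ⟫`.

Splitting `η` along `ξ` gives `|⟪η, ζ⟫| ≤ |q| p + √(1 - |q|²) √(r² - p²)` with `r = ‖ζ‖` and
`p = |⟪ξ, ζ⟫|`. As `S T² = 0`, replacing `x` by `x - β T x` keeps `ζ` and replaces `ξ` by its
component orthogonal to `ζ`; this yields `r² ≤ ‖T‖_A √(r² - p²)`, a disc in the `(p, √(r² - p²))`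
plane on which the linear form is at most `(1 + √(1 - |q|²)) / 2 · ‖T‖_A`.

For circularity let `K` be the closure of the range of `S T` and `U` the unitary that is the
identity on `K` and multiplication by `e^{iθ}` on `Kᗮ`. Since the range of `A` is closed, every
vector of `K` is `S u` with `S T u = 0`. Choosing `u` so that `S u` is the `K`-component of `S x`,
the vector `x' = e^{iθ} x + (1 - e^{iθ}) u` has `S x' = U ξ` and `S T x' = e^{iθ} ζ`; as `U`
preserves inner products and fixes `K ∋ ζ`, the pair `(x', y')` realizes `e^{iθ} ⟪η, ζ⟫`.
-/

noncomputable section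

open Filter

variable {H : Type*} [NormedAddCommGroup H] [InnerProductSpace ℂ H] [CompleteSpace H]

open scoped InnerProductSpace

theorem mul_add_mul_le_of_sq_add_sq_le {Q s p u M : ℝ} (hQs : Q ^ 2 + s ^ 2 = 1) (hM : 0 ≤ M)
    (h : p ^ 2 + u ^ 2 ≤ M * u) : Q * p + s * u ≤ (1 + s) / 2 * M := by
  -- `(p, u)` lies in the disc of radius `M / 2` about `(0, M / 2)`; apply Cauchy–Schwarz.
  have hsq : (Q * p + s * (u - M / 2)) ^ 2 ≤ (M / 2) ^ 2 := by
    nlinarith [sq_nonneg (Q * (u - M / 2) - s * p)]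
  nlinarith [(abs_le_of_sq_le_sq' hsq (by positivity)).2]

section Geometry

variable {𝕜 E : Type*} [RCLike 𝕜] [NormedAddCommGroup E] [InnerProductSpace 𝕜 E]

theorem norm_sub_inner_div_smul_sq (u v : E) :
    ‖v - (⟪u, v⟫_𝕜 / ((‖u‖ ^ 2 : ℝ) : 𝕜)) • u‖ ^ 2 = ‖v‖ ^ 2 - ‖⟪u, v⟫_𝕜‖ ^ 2 / ‖u‖ ^ 2 := by
  rcases eq_or_ne u 0 with rfl | hu
  · simp
  have hinner : ⟪v, (⟪u, v⟫_𝕜 / ((‖u‖ ^ 2 : ℝ) : 𝕜)) • u⟫_𝕜 = ((‖⟪u, v⟫_𝕜‖ ^ 2 / ‖u‖ ^ 2 : ℝ) : 𝕜) := by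
    rw [inner_smul_right, ← inner_conj_symm v u, div_mul_eq_mul_div, RCLike.mul_conj]
    push_cast; ring
  rw [@norm_sub_sq 𝕜, hinner, RCLike.ofReal_re, norm_smul, norm_div, RCLike.norm_ofReal,
    abs_of_nonneg (by positivity)]
  field_simp
  ring

theorem norm_sub_inner_smul_sq {ξ : E} (hξ : ‖ξ‖ = 1) (v : E) :
    ‖v - ⟪ξ, v⟫_𝕜 • ξ‖ ^ 2 = ‖v‖ ^ 2 - ‖⟪ξ, v⟫_𝕜‖ ^ 2 := by
  simpa [hξ] using norm_sub_inner_div_smul_sq (𝕜 := 𝕜) ξ v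

theorem norm_inner_le_mul_add_sqrt_mul {ξ η : E} (hξ : ‖ξ‖ = 1) (hη : ‖η‖ = 1) (ζ : E) :
    ‖⟪η, ζ⟫_𝕜‖ ≤ ‖⟪η, ξ⟫_𝕜‖ * ‖⟪ξ, ζ⟫_𝕜‖ +
      √(1 - ‖⟪η, ξ⟫_𝕜‖ ^ 2) * √(‖ζ‖ ^ 2 - ‖⟪ξ, ζ⟫_𝕜‖ ^ 2) := by
  have hsplit : ⟪η, ζ⟫_𝕜 = ⟪η, ξ⟫_𝕜 * ⟪ξ, ζ⟫_𝕜 + ⟪η - ⟪ξ, η⟫_𝕜 • ξ, ζ - ⟪ξ, ζ⟫_𝕜 • ξ⟫_𝕜 := by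
    simp only [inner_sub_left, inner_sub_right, inner_smul_left, inner_smul_right,
      inner_conj_symm, inner_self_eq_norm_sq_to_K, hξ, RCLike.ofReal_one, one_pow, mul_one]
    ring
  have hnorm : ∀ v, ‖v - ⟪ξ, v⟫_𝕜 • ξ‖ = √(‖v‖ ^ 2 - ‖⟪ξ, v⟫_𝕜‖ ^ 2) := fun v => by
    rw [← norm_sub_inner_smul_sq hξ, Real.sqrt_sq (norm_nonneg _)]
  calc ‖⟪η, ζ⟫_𝕜‖
      ≤ ‖⟪η, ξ⟫_𝕜‖ * ‖⟪ξ, ζ⟫_𝕜‖ + ‖η - ⟪ξ, η⟫_𝕜 • ξ‖ * ‖ζ - ⟪ξ, ζ⟫_𝕜 • ξ‖ := by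
        rw [hsplit, ← norm_mul]
        exact (norm_add_le _ _).trans (add_le_add_right (norm_inner_le_norm _ _) _)
    _ = _ := by rw [hnorm, hnorm, hη, norm_inner_symm, one_pow]

variable (K : Submodule 𝕜 E) [K.HasOrthogonalProjection]

def orthogonalRotation (e : 𝕜) (v : E) : E := K.starProjection v + e • (v - K.starProjection v)

theorem inner_orthogonalRotation {e : 𝕜} (he : ‖e‖ = 1) (v w : E) :
    ⟪orthogonalRotation K e v, orthogonalRotation K e w⟫_𝕜 = ⟪v, w⟫_𝕜 := by
  have hee : (starRingEnd 𝕜) e * e = 1 := by rw [RCLike.conj_mul, he]; simp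
  have h1 := K.starProjection_inner_eq_zero v _ (K.starProjection_apply_mem w)
  have h2 := inner_eq_zero_symm.1 (K.starProjection_inner_eq_zero w _ (K.starProjection_apply_mem v))
  conv_rhs => rw [← add_sub_cancel (K.starProjection v) v, ← add_sub_cancel (K.starProjection w) w]
  simp only [orthogonalRotation, inner_add_left, inner_add_right, inner_smul_left,
    inner_smul_right, h1, h2]
  linear_combination (⟪v - K.starProjection v, w - K.starProjection w⟫_𝕜) * hee

theorem norm_orthogonalRotation {e : 𝕜} (he : ‖e‖ = 1) (v : E) :
    ‖orthogonalRotation K e v‖ = ‖v‖ := by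
  rw [norm_eq_sqrt_re_inner (𝕜 := 𝕜), inner_orthogonalRotation K he, ← norm_eq_sqrt_re_inner]

theorem inner_orthogonalRotation_of_mem (e : 𝕜) (v : E) {k : E} (hk : k ∈ K) :
    ⟪orthogonalRotation K e v, k⟫_𝕜 = ⟪v, k⟫_𝕜 := by
  simp [orthogonalRotation, inner_add_left, inner_smul_left, K.starProjection_inner_eq_zero v k hk,
    K.inner_starProjection_left_eq_right, K.starProjection_eq_self_iff.2 hk]

end Geometry

section OperatorPair

variable {𝕜 E : Type*} [RCLike 𝕜] [NormedAddCommGroup E] [InnerProductSpace 𝕜 E]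
  {S T : E →L[𝕜] E}

theorem apply_comp_eq_zero_of_mem_topologicalClosure {c : ℝ} (hTS : ∀ u, ‖S (T u)‖ ≤ c * ‖S u‖)
    (hST : ∀ u, S (T (T u)) = 0) {u : E}
    (hu : S u ∈ (S ∘L T).range.topologicalClosure) : S (T u) = 0 := by
  have hclosed : IsClosed {y | ‖S (T u)‖ ≤ c * ‖S u - y‖} :=
    isClosed_le continuous_const (by fun_prop)
  have hrange : ((S ∘L T).range : Set E) ⊆ {y | ‖S (T u)‖ ≤ c * ‖S u - y‖} := by
    rintro _ ⟨w, rfl⟩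
    calc ‖S (T u)‖ = ‖S (T (u - T w))‖ := by rw [map_sub, map_sub, hST, sub_zero]
      _ ≤ c * ‖S (u - T w)‖ := hTS _
      _ = c * ‖S u - (S ∘L T) w‖ := by rw [map_sub]; rfl
  rw [← SetLike.mem_coe, Submodule.topologicalClosure_coe] at hu
  simpa using closure_minimal hrange hclosed hu

theorem sq_norm_apply_comp_le {M : ℝ} (hTS : ∀ u, ‖S (T u)‖ ≤ M * ‖S u‖)
    (hST : ∀ u, S (T (T u)) = 0) {x : E} (hx : ‖S x‖ = 1) :
    ‖S (T x)‖ ^ 2 ≤ M * √(‖S (T x)‖ ^ 2 - ‖⟪S x, S (T x)⟫_𝕜‖ ^ 2) := by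
  set ζ := S (T x)
  rcases eq_or_ne ζ 0 with hζ | hζ
  · simp [hζ]
  -- `S x'` is the component of `S x` orthogonal to `ζ`, while `S (T x') = ζ` since `S T² = 0`.
  set x' := x - (⟪ζ, S x⟫_𝕜 / ((‖ζ‖ ^ 2 : ℝ) : 𝕜)) • T x
  have hTx' : S (T x') = ζ := by simp [x', ζ, hST]
  have hx' : ‖ζ‖ * ‖S x'‖ = √(‖ζ‖ ^ 2 - ‖⟪S x, ζ⟫_𝕜‖ ^ 2) := by
    rw [← Real.sqrt_sq (norm_nonneg ζ), ← Real.sqrt_sq (norm_nonneg (S x')), ← Real.sqrt_mul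
      (sq_nonneg _), Real.sqrt_sq (norm_nonneg ζ), map_sub, map_smul,
      norm_sub_inner_div_smul_sq, hx, norm_inner_symm]
    congr 1
    field_simp
  calc ‖ζ‖ ^ 2 = ‖ζ‖ * ‖S (T x')‖ := by rw [hTx', sq]
    _ ≤ ‖ζ‖ * (M * ‖S x'‖) := mul_le_mul_of_nonneg_left (hTS _) (norm_nonneg _)
    _ = M * √(‖ζ‖ ^ 2 - ‖⟪S x, ζ⟫_𝕜‖ ^ 2) := by rw [← hx']; ring

end OperatorPair

section SemiNormA

variable {E : Type*} [NormedAddCommGroup E] [InnerProductSpace ℂ E]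

theorem semiNormA_smul (A : E →L[ℂ] E) (c : ℂ) (x : E) :
    semiNormA A (c • x) = ‖c‖ * semiNormA A x := by
  rw [semiNormA, semiNormA, sipA, sipA, map_smul, inner_smul_left, inner_smul_right, ← mul_assoc,
    Complex.conj_mul', ← Complex.ofReal_pow, Complex.re_ofReal_mul, Real.sqrt_mul (sq_nonneg _),
    Real.sqrt_sq (norm_nonneg _)]

variable {A T : E →L[ℂ] E}

theorem opNormA_nonneg : 0 ≤ opNormA A T :=
  Real.sSup_nonneg (by rintro _ ⟨x, -, rfl⟩; exact Real.sqrt_nonneg _)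

theorem semiNormA_apply_le_opNormA_mul (hT : ABounded A T) (x : E) :
    semiNormA A (T x) ≤ opNormA A T * semiNormA A x := by
  obtain ⟨c, hc, hTc⟩ := hT
  have hx0 : 0 ≤ semiNormA A x := Real.sqrt_nonneg _
  rcases hx0.eq_or_lt with hx | hx
  · rw [← hx, mul_zero]
    simpa [← hx] using hTc x
  have hbdd : BddAbove ((fun x => semiNormA A (T x)) '' {x : E | semiNormA A x ≤ 1}) :=
    ⟨c, by rintro _ ⟨y, hy, rfl⟩; exact (hTc y).trans (mul_le_of_le_one_right hc.le hy)⟩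
  have hunit : semiNormA A (((semiNormA A x)⁻¹ : ℂ) • x) = 1 := by
    rw [semiNormA_smul, ← Complex.ofReal_inv, Complex.norm_real, Real.norm_of_nonneg (by positivity),
      inv_mul_cancel₀ hx.ne']
  have hle : semiNormA A (T (((semiNormA A x)⁻¹ : ℂ) • x)) ≤ opNormA A T :=
    le_csSup hbdd ⟨_, hunit.le, rfl⟩
  rw [map_smul, semiNormA_smul, ← Complex.ofReal_inv, Complex.norm_real,
    Real.norm_of_nonneg (by positivity), inv_mul_le_iff₀ hx] at hle
  linarith

end SemiNormA

section Sqrt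

variable {A : H →L[ℂ] H}

theorem inner_sqrt_apply_left (v w : H) :
    ⟪CFC.sqrt A v, w⟫_ℂ = ⟪v, CFC.sqrt A w⟫_ℂ :=
  ((ContinuousLinearMap.nonneg_iff_isPositive _).1 (CFC.sqrt_nonneg A)).inner_left_eq_inner_right v w

theorem sqrt_apply_sqrt_apply (hA : A.IsPositive) (v : H) : CFC.sqrt A (CFC.sqrt A v) = A v :=
  DFunLike.congr_fun (CFC.sqrt_mul_sqrt_self A ((ContinuousLinearMap.nonneg_iff_isPositive A).2 hA)) v

theorem sipA_eq_inner_sqrt (hA : A.IsPositive) (x y : H) : sipA A x y = ⟪CFC.sqrt A y, CFC.sqrt A x⟫_ℂ := by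
  rw [sipA, inner_sqrt_apply_left, sqrt_apply_sqrt_apply hA]

theorem semiNormA_eq_norm_sqrt (hA : A.IsPositive) (x : H) : semiNormA A x = ‖CFC.sqrt A x‖ := by
  rw [semiNormA, sipA_eq_inner_sqrt hA, ← RCLike.re_to_complex, inner_self_eq_norm_sq,
    Real.sqrt_sq (norm_nonneg _)]

theorem sqrt_apply_eq_zero (hA : A.IsPositive) {v : H} (hv : A v = 0) : CFC.sqrt A v = 0 := by
  rw [← norm_eq_zero, ← semiNormA_eq_norm_sqrt hA, semiNormA, sipA, hv]
  simp

theorem range_sqrt_le_range (hA : A.IsPositive) (hclosed : IsClosed (A.range : Set H)) :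
    (CFC.sqrt A).range ≤ A.range := by
  have hker : A.kerᗮ = A.range := by
    rw [ContinuousLinearMap.orthogonal_ker, hA.isSelfAdjoint.adjoint_eq,
      hclosed.submodule_topologicalClosure_eq]
  rintro _ ⟨v, rfl⟩
  rw [← hker, Submodule.mem_orthogonal]
  intro k hk
  change ⟪k, CFC.sqrt A v⟫_ℂ = 0
  rw [← inner_sqrt_apply_left, sqrt_apply_eq_zero hA hk, inner_zero_left]

end Sqrt

section Nilpotent

variable {A T : H →L[ℂ] H}

theorem sqrt_apply_apply_apply_eq_zero (hA : A.IsPositive) (hnil2 : A.comp (T ^ 2) = 0) (u : H) :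
    CFC.sqrt A (T (T u)) = 0 :=
  sqrt_apply_eq_zero hA (DFunLike.congr_fun hnil2 u)

theorem norm_sqrt_apply_le_opNormA_mul (hA : A.IsPositive) (hT : ABounded A T) (u : H) :
    ‖CFC.sqrt A (T u)‖ ≤ opNormA A T * ‖CFC.sqrt A u‖ := by
  simpa only [semiNormA_eq_norm_sqrt hA] using semiNormA_apply_le_opNormA_mul hT u

theorem norm_le_of_mem_WqA (hA : A.IsPositive) (hT : ABounded A T) (hnil2 : A.comp (T ^ 2) = 0)
    {q lam : ℂ} (hlam : lam ∈ WqA A q T) :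
    ‖lam‖ ≤ (1 + √(1 - ‖q‖ ^ 2)) / 2 * opNormA A T := by
  obtain ⟨x, y, hx, hy, rfl, rfl⟩ := hlam
  rw [semiNormA_eq_norm_sqrt hA] at hx hy
  rw [sipA_eq_inner_sqrt hA, sipA_eq_inner_sqrt hA]
  set S := CFC.sqrt A
  have hconstraint := sq_norm_apply_comp_le (norm_sqrt_apply_le_opNormA_mul hA hT)
    (sqrt_apply_apply_apply_eq_zero hA hnil2) hx
  have hq : ‖⟪S y, S x⟫_ℂ‖ ≤ 1 := (norm_inner_le_norm _ _).trans (by rw [hx, hy, one_mul])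
  have hp : ‖⟪S x, S (T x)⟫_ℂ‖ ≤ ‖S (T x)‖ :=
    (norm_inner_le_norm _ _).trans (by rw [hx, one_mul])
  refine (norm_inner_le_mul_add_sqrt_mul hx hy _).trans
    (mul_add_mul_le_of_sq_add_sq_le ?_ opNormA_nonneg ?_)
  · rw [Real.sq_sqrt (by nlinarith [norm_nonneg ⟪S y, S x⟫_ℂ])]
    ring
  · rw [Real.sq_sqrt (sub_nonneg.2 (pow_le_pow_left₀ (norm_nonneg _) hp 2))]
    simpa using hconstraint

theorem topologicalClosure_range_sqrt_comp_le (hA : A.IsPositive)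
    (hclosed : IsClosed (A.range : Set H)) :
    (CFC.sqrt A ∘L T).range.topologicalClosure ≤ (CFC.sqrt A).range :=
  calc (CFC.sqrt A ∘L T).range.topologicalClosure
      ≤ A.range := Submodule.topologicalClosure_minimal _
        ((LinearMap.range_comp_le_range _ _).trans (range_sqrt_le_range hA hclosed)) hclosed
    _ ≤ (CFC.sqrt A).range := by
        rintro _ ⟨v, rfl⟩
        exact ⟨CFC.sqrt A v, sqrt_apply_sqrt_apply hA v⟩

theorem exists_sqrt_apply_eq_orthogonalRotation (hA : A.IsPositive) (hT : ABounded A T)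
    (hnil2 : A.comp (T ^ 2) = 0) (hclosed : IsClosed (A.range : Set H)) (e : ℂ) (x : H) :
    ∃ x', CFC.sqrt A x' =
        orthogonalRotation (CFC.sqrt A ∘L T).range.topologicalClosure e (CFC.sqrt A x) ∧
      CFC.sqrt A (T x') = e • CFC.sqrt A (T x) := by
  set S := CFC.sqrt A
  set K := (S ∘L T).range.topologicalClosure
  obtain ⟨u, hu : S u = K.starProjection (S x)⟩ := topologicalClosure_range_sqrt_comp_le hA hclosed
    (K.starProjection_apply_mem (S x))
  have hTu : S (T u) = 0 := apply_comp_eq_zero_of_mem_topologicalClosure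
    (norm_sqrt_apply_le_opNormA_mul hA hT) (sqrt_apply_apply_apply_eq_zero hA hnil2)
    (hu ▸ K.starProjection_apply_mem (S x))
  refine ⟨e • x + (1 - e) • u, ?_, ?_⟩
  · simp only [orthogonalRotation, map_add, map_smul, hu]
    module
  · simp [hTu]

theorem mul_mem_WqA (hA : A.IsPositive) (hT : ABounded A T) (hnil2 : A.comp (T ^ 2) = 0)
    (hclosed : IsClosed (A.range : Set H)) {e q lam : ℂ} (he : ‖e‖ = 1) (hlam : lam ∈ WqA A q T) :
    e * lam ∈ WqA A q T := by
  obtain ⟨x, y, hx, hy, rfl, rfl⟩ := hlam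
  obtain ⟨x', hx', hTx'⟩ := exists_sqrt_apply_eq_orthogonalRotation hA hT hnil2 hclosed e x
  obtain ⟨y', hy', -⟩ := exists_sqrt_apply_eq_orthogonalRotation hA hT hnil2 hclosed e y
  have hTx : CFC.sqrt A (T x) ∈ (CFC.sqrt A ∘L T).range.topologicalClosure :=
    Submodule.le_topologicalClosure _ (LinearMap.mem_range_self _ x)
  refine ⟨x', y', ?_, ?_, ?_, ?_⟩
  · rwa [semiNormA_eq_norm_sqrt hA, hx', norm_orthogonalRotation _ he, ← semiNormA_eq_norm_sqrt hA]
  · rwa [semiNormA_eq_norm_sqrt hA, hy', norm_orthogonalRotation _ he, ← semiNormA_eq_norm_sqrt hA]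
  · rw [sipA_eq_inner_sqrt hA, hx', hy', inner_orthogonalRotation _ he, sipA_eq_inner_sqrt hA]
  · rw [sipA_eq_inner_sqrt hA, sipA_eq_inner_sqrt hA, hTx', hy', inner_smul_right,
      inner_orthogonalRotation_of_mem _ _ _ hTx]

end Nilpotent

theorem stmt_16_general (A : H →L[ℂ] H) (hA : A.IsPositive)
    (T : H →L[ℂ] H) (hT : ABounded A T)
    (hnil2 : A.comp (T ^ 2) = 0)
    (hclosed : IsClosed ((LinearMap.range A.toLinearMap : Submodule ℂ H) : Set H))
    (q : ℂ) :
    wqA A q T ≤ (1 + Real.sqrt (1 - ‖q‖ ^ 2)) / 2 * opNormA A T ∧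
      ∀ lam ∈ WqA A q T, ∀ θ : ℝ, Complex.exp (θ * Complex.I) * lam ∈ WqA A q T := by
  refine ⟨Real.sSup_le ?_ (mul_nonneg (by positivity) opNormA_nonneg),
    fun lam hlam θ => mul_mem_WqA hA hT hnil2 hclosed (Complex.norm_exp_ofReal_mul_I θ) hlam⟩
  rintro _ ⟨lam, hlam, rfl⟩
  exact norm_le_of_mem_WqA hA hT hnil2 hlam

theorem stmt_16 (A : H →L[ℂ] H) (hA : A.IsPositive)
    (T : H →L[ℂ] H) (hT : ABounded A T)
    (hnil2 : A.comp (T ^ 2) = 0) (hnil1 : A.comp T ≠ 0)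
    (hclosed : IsClosed ((LinearMap.range A.toLinearMap : Submodule ℂ H) : Set H))
    (q : ℂ) (hq : ‖q‖ ≤ 1) :
    wqA A q T ≤ (1 + Real.sqrt (1 - ‖q‖ ^ 2)) / 2 * opNormA A T ∧
      ∀ lam ∈ WqA A q T, ∀ θ : ℝ, Complex.exp (θ * Complex.I) * lam ∈ WqA A q T :=
  stmt_16_general A hA T hT hnil2 hclosed q
end
end
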